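/- arXiv:1904.03029 — 2 statements merged into one kernel-verified Lean document; each statement's English description precedes it below -/
import Mathlib

section
/- Let n ≥ 1, q = 3^n, C_0 the nonzero squares of F_q, C_1 the nonsquares, α, β, γ, θ ∈ F_q^* with γ a nonsquare, θ a nonzero square, and α, β both squares or both nonsquares. Let m ∈ {0,1} with m = 0 if α is a square and m = 1 if α is a nonsquare. Define f : F_q → F_q by f(0) = 0, f(x) = α(x^3 + γx^2 + γ^2 x) for x ∈ C_0, f(x) = β(x^3 + θx^2 + θ^2 x) for x ∈ C_1 (so f is a bijection). Define u(x) = Σ_{j=0}^{n-1} Σ_{k=0}^{n-1} γ·(α^{-1}γ^{-3}x)^((3^j+3^k)/2) and v(x) = Σ_{j=0}^{n-1} Σ_{k=0}^{n-1} θ·(β^{-1}θ^{-3}x)^((3^j+3^k)/2), and g(x) = -u(x)(1 + (-1)^m x^((q-1)/2)) - v(x)(1 + (-1)^(m+1) x^((q-1)/2)). Then g(f(c)) = c for every c ∈ F_q. -/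
open Finset

/-! In characteristic 3, `x³ + δx² + δ²x = x(x - δ)²`, so on the branch with coefficients
`(a, δ) = (α, γ)` or `(β, θ)`, `f` is `x ↦ aδ³ · r(r - 1)²` with `r = x/δ` a nonsquare. For `w = r(r - 1)²` the double sum
factors as `w·A²` with `A = ∑_{j<n} w^((3^j-1)/2)`, and by Frobenius `(r - 1)A` telescopes to
`r^((q-1)/2) - 1 = -2 = 1`; hence the sum is `r(r - 1)²A² = r`. Since `(x - δ)²` is a nonzero
square, `f(c)^((q-1)/2) = a^((q-1)/2) c^((q-1)/2)`, which together with `m` selects the branch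
`u` or `v` of `g`. -/

lemma three_pow_mod_two (j : ℕ) : 3 ^ j % 2 = 1 := by
  simp [Nat.pow_mod]

lemma three_pow_add_three_pow_div_two (j k : ℕ) :
    (3 ^ j + 3 ^ k) / 2 = 1 + (3 ^ j - 1) / 2 + (3 ^ k - 1) / 2 := by
  have hj := three_pow_mod_two j
  have hk := three_pow_mod_two k
  generalize 3 ^ j = a at *
  generalize 3 ^ k = b at *
  omega

lemma three_pow_sub_one_div_two_add_three_pow (j : ℕ) :
    (3 ^ j - 1) / 2 + 3 ^ j = (3 ^ (j + 1) - 1) / 2 := by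
  have hj := three_pow_mod_two j
  rw [pow_succ]
  generalize 3 ^ j = a at *
  omega

lemma three_pow_sub_one_div_two (n : ℕ) : (3 ^ n - 1) / 2 = 3 ^ n / 2 := by
  have := three_pow_mod_two n
  generalize 3 ^ n = a at *
  omega

lemma sum_sum_pow_three_pow_add_div_two {R : Type*} [CommSemiring R] (w : R) (n : ℕ) :
    ∑ j ∈ range n, ∑ k ∈ range n, w ^ ((3 ^ j + 3 ^ k) / 2) =
      w * (∑ j ∈ range n, w ^ ((3 ^ j - 1) / 2)) ^ 2 := by
  simp_rw [sq, sum_mul_sum, mul_sum, three_pow_add_three_pow_div_two, pow_add, pow_one, mul_assoc]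

lemma sub_one_mul_sum_pow_three_pow_sub_one_div_two {R : Type*} [CommRing R] [CharP R 3]
    (r : R) (n : ℕ) :
    (r - 1) * ∑ j ∈ range n, (r * (r - 1) ^ 2) ^ ((3 ^ j - 1) / 2) =
      r ^ ((3 ^ n - 1) / 2) - 1 := by
  have hterm (j : ℕ) : (r - 1) * (r * (r - 1) ^ 2) ^ ((3 ^ j - 1) / 2) =
      r ^ ((3 ^ (j + 1) - 1) / 2) - r ^ ((3 ^ j - 1) / 2) := by
    have hodd : 2 * ((3 ^ j - 1) / 2) + 1 = 3 ^ j := by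
      have := three_pow_mod_two j
      generalize 3 ^ j = a at *
      omega
    calc (r - 1) * (r * (r - 1) ^ 2) ^ ((3 ^ j - 1) / 2)
      _ = r ^ ((3 ^ j - 1) / 2) * (r - 1) ^ (2 * ((3 ^ j - 1) / 2) + 1) := by
        rw [mul_pow, ← pow_mul, mul_comm 2, pow_succ]; ring
      _ = r ^ ((3 ^ j - 1) / 2) * (r ^ 3 ^ j - 1) := by
        rw [hodd, sub_pow_char_pow, one_pow]
      _ = r ^ ((3 ^ (j + 1) - 1) / 2) - r ^ ((3 ^ j - 1) / 2) := by
        rw [← three_pow_sub_one_div_two_add_three_pow, pow_add]; ring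
  rw [mul_sum, sum_congr rfl fun j _ => hterm j, sum_range_sub (fun j => r ^ ((3 ^ j - 1) / 2))]
  simp

lemma cubic_eq_mul_sub_sq {R : Type*} [CommRing R] [CharP R 3] (x δ : R) :
    x ^ 3 + δ * x ^ 2 + δ ^ 2 * x = x * (x - δ) ^ 2 := by
  linear_combination (δ * x ^ 2) * CharP.cast_eq_zero R 3

section FiniteField

variable {F : Type*} [Field F] [Fintype F]

lemma pow_card_div_two_of_not_isSquare (hF : ringChar F ≠ 2) {x : F} (hx : ¬ IsSquare x) :
    x ^ (Fintype.card F / 2) = -1 :=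
  have hx0 : x ≠ 0 := by rintro rfl; exact hx (IsSquare.zero)
  (FiniteField.pow_dichotomy hF hx0).resolve_left
    fun h => hx ((FiniteField.isSquare_iff hF hx0).mpr h)

lemma pow_card_div_two_mul_cubic (hF : ringChar F ≠ 2) [CharP F 3] (a : F) {x δ : F}
    (hxδ : x ≠ δ) :
    (a * (x ^ 3 + δ * x ^ 2 + δ ^ 2 * x)) ^ (Fintype.card F / 2) =
      a ^ (Fintype.card F / 2) * x ^ (Fintype.card F / 2) := by
  have hsq : ((x - δ) ^ 2) ^ (Fintype.card F / 2) = 1 :=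
    (FiniteField.isSquare_iff hF (pow_ne_zero 2 (sub_ne_zero.mpr hxδ))).mp (IsSquare.sq _)
  rw [cubic_eq_mul_sub_sq, mul_pow, mul_pow, hsq, mul_one]

lemma pow_card_div_two_eq_neg_one_pow (hF : ringChar F ≠ 2) {a : F} (ha : a ≠ 0) {m : ℕ}
    (hm : (IsSquare a ∧ m = 0) ∨ (¬ IsSquare a ∧ m = 1)) :
    a ^ (Fintype.card F / 2) = (-1) ^ m := by
  rcases hm with ⟨hsq, rfl⟩ | ⟨hsq, rfl⟩
  · simpa using (FiniteField.isSquare_iff hF ha).mp hsq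
  · simpa using pow_card_div_two_of_not_isSquare hF hsq

variable [CharP F 3]

lemma sum_sum_pow_three_pow_add_div_two_of_not_isSquare {n : ℕ} (hcard : Fintype.card F = 3 ^ n)
    {r : F} (hr : ¬ IsSquare r) :
    ∑ j ∈ range n, ∑ k ∈ range n, (r * (r - 1) ^ 2) ^ ((3 ^ j + 3 ^ k) / 2) = r := by
  have hF : ringChar F ≠ 2 := by rw [ringChar.eq F 3]; decide
  set A := ∑ j ∈ range n, (r * (r - 1) ^ 2) ^ ((3 ^ j - 1) / 2)
  have hA : (r - 1) * A = 1 := by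
    rw [sub_one_mul_sum_pow_three_pow_sub_one_div_two, three_pow_sub_one_div_two, ← hcard,
      pow_card_div_two_of_not_isSquare hF hr]
    linear_combination -CharP.cast_eq_zero F 3
  rw [sum_sum_pow_three_pow_add_div_two]
  linear_combination r * ((r - 1) * A + 1) * hA

lemma sum_sum_mul_pow_inv_mul_cubic {n : ℕ} (hcard : Fintype.card F = 3 ^ n) {a δ x : F}
    (ha : a ≠ 0) (hδ : δ ≠ 0) (hx : ¬ IsSquare (x / δ)) :
    ∑ j ∈ range n, ∑ k ∈ range n,
      δ * (a⁻¹ * δ⁻¹ ^ 3 * (a * (x ^ 3 + δ * x ^ 2 + δ ^ 2 * x))) ^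
        ((3 ^ j + 3 ^ k) / 2) = x := by
  have hbase : a⁻¹ * δ⁻¹ ^ 3 * (a * (x ^ 3 + δ * x ^ 2 + δ ^ 2 * x)) =
      x / δ * (x / δ - 1) ^ 2 := by
    rw [cubic_eq_mul_sub_sq]
    field_simp
  simp_rw [hbase, ← mul_sum, sum_sum_pow_three_pow_add_div_two_of_not_isSquare hcard hx]
  exact mul_div_cancel₀ x hδ

end FiniteField

theorem stmt_16_general {F : Type*} [Field F] [Fintype F] (n : ℕ)
    (hcard : Fintype.card F = 3 ^ n)
    (α β γ θ : F) (hα : α ≠ 0) (hβ : β ≠ 0) (hθ0 : θ ≠ 0)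
    (hγ : ¬ IsSquare γ) (hθ : IsSquare θ) (hαβ : IsSquare α ↔ IsSquare β)
    (m : ℕ) (hm : (IsSquare α ∧ m = 0) ∨ (¬ IsSquare α ∧ m = 1))
    (f u v g : F → F)
    (hf0 : f 0 = 0)
    (hfs : ∀ x : F, x ≠ 0 → IsSquare x → f x = α * (x ^ 3 + γ * x ^ 2 + γ ^ 2 * x))
    (hfn : ∀ x : F, x ≠ 0 → ¬ IsSquare x → f x = β * (x ^ 3 + θ * x ^ 2 + θ ^ 2 * x))
    (hu : ∀ x, u x = ∑ j ∈ Finset.range n, ∑ k ∈ Finset.range n,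
        γ * (α⁻¹ * γ⁻¹ ^ 3 * x) ^ ((3 ^ j + 3 ^ k) / 2))
    (hv : ∀ x, v x = ∑ j ∈ Finset.range n, ∑ k ∈ Finset.range n,
        θ * (β⁻¹ * θ⁻¹ ^ 3 * x) ^ ((3 ^ j + 3 ^ k) / 2))
    (hg : ∀ x, g x = -(u x) * (1 + (-1 : F) ^ m * x ^ ((3 ^ n - 1) / 2)) -
        v x * (1 + (-1 : F) ^ (m + 1) * x ^ ((3 ^ n - 1) / 2))) :
    ∀ c : F, g (f c) = c := by
  have : CharP F 3 := charP_of_card_eq_prime_pow hcard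
  have hF : ringChar F ≠ 2 := by rw [ringChar.eq F 3]; decide
  have hsign : (-1 : F) ^ m * (-1) ^ m = 1 := by rw [← mul_pow]; simp
  have hαpow := pow_card_div_two_eq_neg_one_pow hF hα hm
  have hβpow := pow_card_div_two_eq_neg_one_pow hF hβ (by rwa [hαβ] at hm)
  simp_rw [three_pow_sub_one_div_two, ← hcard, pow_succ, mul_neg_one] at hg
  intro c
  rcases eq_or_ne c 0 with rfl | hc
  · simp [hf0, hg, hu, hv, three_pow_add_three_pow_div_two]
  by_cases hcsq : IsSquare c
  · have hcγ : c ≠ γ := fun h => hγ (h ▸ hcsq)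
    have hquot : ¬ IsSquare (c / γ) := fun h =>
      hγ (by simpa [div_div_cancel₀ hc] using hcsq.div h)
    have hγ0 : γ ≠ 0 := by rintro rfl; exact hγ IsSquare.zero
    have hfc : f c ^ (Fintype.card F / 2) = (-1) ^ m := by
      rw [hfs c hc hcsq, pow_card_div_two_mul_cubic hF α hcγ, hαpow,
        (FiniteField.isSquare_iff hF hc).mp hcsq, mul_one]
    have huc : u (f c) = c := by
      rw [hu, hfs c hc hcsq, sum_sum_mul_pow_inv_mul_cubic hcard hα hγ0 hquot]
    rw [hg, hfc, huc]
    linear_combination (v (f c) - c) * hsign - c * CharP.cast_eq_zero F 3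
  · have hcθ : c ≠ θ := fun h => hcsq (h ▸ hθ)
    have hquot : ¬ IsSquare (c / θ) := fun h =>
      hcsq (by simpa [div_mul_cancel₀ c hθ0] using h.mul hθ)
    have hfc : f c ^ (Fintype.card F / 2) = -(-1) ^ m := by
      rw [hfn c hc hcsq, pow_card_div_two_mul_cubic hF β hcθ, hβpow,
        pow_card_div_two_of_not_isSquare hF hcsq, mul_neg_one]
    have hvc : v (f c) = c := by
      rw [hv, hfn c hc hcsq, sum_sum_mul_pow_inv_mul_cubic hcard hβ hθ0 hquot]
    rw [hg, hfc, hvc]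
    linear_combination (u (f c) - c) * hsign - c * CharP.cast_eq_zero F 3

theorem stmt_16 {F : Type*} [Field F] [Fintype F] (n : ℕ) (hn : 1 ≤ n)
    (hcard : Fintype.card F = 3 ^ n)
    (α β γ θ : F) (hα : α ≠ 0) (hβ : β ≠ 0) (hθ0 : θ ≠ 0)
    (hγ : ¬ IsSquare γ) (hθ : IsSquare θ) (hαβ : IsSquare α ↔ IsSquare β)
    (m : ℕ) (hm : (IsSquare α ∧ m = 0) ∨ (¬ IsSquare α ∧ m = 1))
    (f u v g : F → F)
    (hf0 : f 0 = 0)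
    (hfs : ∀ x : F, x ≠ 0 → IsSquare x → f x = α * (x ^ 3 + γ * x ^ 2 + γ ^ 2 * x))
    (hfn : ∀ x : F, x ≠ 0 → ¬ IsSquare x → f x = β * (x ^ 3 + θ * x ^ 2 + θ ^ 2 * x))
    (hu : ∀ x, u x = ∑ j ∈ Finset.range n, ∑ k ∈ Finset.range n,
        γ * (α⁻¹ * γ⁻¹ ^ 3 * x) ^ ((3 ^ j + 3 ^ k) / 2))
    (hv : ∀ x, v x = ∑ j ∈ Finset.range n, ∑ k ∈ Finset.range n,
        θ * (β⁻¹ * θ⁻¹ ^ 3 * x) ^ ((3 ^ j + 3 ^ k) / 2))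
    (hg : ∀ x, g x = -(u x) * (1 + (-1 : F) ^ m * x ^ ((3 ^ n - 1) / 2)) -
        v x * (1 + (-1 : F) ^ (m + 1) * x ^ ((3 ^ n - 1) / 2))) :
    ∀ c : F, g (f c) = c :=
  stmt_16_general n hcard α β γ θ hα hβ hθ0 hγ hθ hαβ m hm f u v g hf0 hfs hfn hu hv hg
end

section
/- Let n ≥ 1, q = 3^n, C_0 the nonzero squares of F_q, C_1 the nonsquares, t a positive integer, and α, β, θ ∈ F_q^*. Define f : F_q → F_q by f(0) = 0, f(x) = α·x^t for x ∈ C_0, and f(x) = β(x^3 + θx^2 + θ^2 x) for x ∈ C_1. Then f is a bijection of F_q if and only if: gcd(t, (q-1)/2) = 1, θ is a nonzero square in F_q, and (α is a nonzero square ↔ β is a nonzero square). -/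
/-!
In characteristic 3 we have `x³ + θx² + θ²x = x(x - θ)²`, so `f` is `α` times a square on `C₀` and
`βx` times a square on `C₁`. When `θ` is a square, `x - θ ≠ 0` on `C₁`, hence `f` maps `C₀` into the
square class of `α` and `C₁` into the class opposite to `β`, both without hitting `0`. Thus `f` is
bijective iff these two classes differ and `f` is injective on `C₀` and on `C₁`. On `C₀`, a cyclic
group of order `(q - 1)/2`, the map `x ↦ xᵗ` is injective iff `gcd(t, (q - 1)/2) = 1`. On `C₁`,
`x(x - θ)² = y(y - θ)²` with `x ≠ y` gives `θx = (x - y + θ)²`, impossible for nonsquare `x`.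
Finally, if `θ` is a nonsquare then `f θ = 0 = f 0`.
-/

open FiniteField Set

lemma injOn_const_mul_iff {α M₀ : Type*} [MonoidWithZero M₀] [IsLeftCancelMulZero M₀]
    {s : Set α} {g : α → M₀} {c : M₀} (hc : c ≠ 0) : s.InjOn (fun x => c * g x) ↔ s.InjOn g :=
  ⟨fun h _ hx _ hy hxy => h hx hy (congrArg (c * ·) hxy),
    fun h => (mul_right_injective₀ hc).comp_injOn h⟩

section Field

variable {F : Type*} [Field F]

lemma cube_add_eq_mul_sub_sq [CharP F 3] (x θ : F) :
    x ^ 3 + θ * x ^ 2 + θ ^ 2 * x = x * (x - θ) ^ 2 := by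
  have h3 : (3 : F) = 0 := by exact_mod_cast CharP.cast_eq_zero F 3
  linear_combination θ * x ^ 2 * h3

lemma injOn_mul_sub_sq_of_isSquare [CharP F 3] {θ : F} (hθ : IsSquare θ) :
    {x : F | ¬IsSquare x}.InjOn fun x => x * (x - θ) ^ 2 := by
  have h3 : (3 : F) = 0 := by exact_mod_cast CharP.cast_eq_zero F 3
  intro x hx y _ hxy
  by_contra hne
  obtain ⟨c, rfl⟩ := hθ
  have hquad : x ^ 2 + x * y + y ^ 2 - 2 * (c * c) * (x + y) + (c * c) ^ 2 = 0 :=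
    (mul_eq_zero.mp (by linear_combination hxy : (x - y) * _ = 0)).resolve_left
      (sub_ne_zero.mpr hne)
  -- the quadratic factor is `(x - y + θ)² - θx` up to multiples of 3
  have hsq : c * c * x = (x - y + c * c) ^ 2 := by
    linear_combination -hquad + (x * y - c * c * x) * h3
  rcases eq_or_ne c 0 with rfl | hc
  · exact hne (sub_eq_zero.mp (pow_eq_zero_iff two_ne_zero |>.mp (by simpa using hsq.symm)))
  · exact hx ⟨(x - y + c * c) / c, by field_simp; linear_combination hsq⟩

variable [Fintype F]

lemma ringChar_eq_of_card_eq_prime_pow {p n : ℕ} (hp : p.Prime)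
    (hcard : Fintype.card F = p ^ n) : ringChar F = p := by
  obtain ⟨k, hchar, hk⟩ := FiniteField.card F (ringChar F)
  have hdvd : ringChar F ∣ p ^ n := hcard ▸ hk ▸ dvd_pow_self _ k.ne_zero
  exact (Nat.prime_dvd_prime_iff_eq hchar hp).mp (hchar.dvd_of_dvd_pow hdvd)

lemma isSquare_mul_iff_of_ne_zero {a b : F} (ha : a ≠ 0) (hb : b ≠ 0) :
    IsSquare (a * b) ↔ (IsSquare a ↔ IsSquare b) := by
  classical
  rw [← quadraticChar_one_iff_isSquare (mul_ne_zero ha hb), ← quadraticChar_one_iff_isSquare ha,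
    ← quadraticChar_one_iff_isSquare hb, map_mul]
  rcases quadraticChar_dichotomy ha with h | h <;>
    rcases quadraticChar_dichotomy hb with h' | h' <;> rw [h, h'] <;> norm_num

lemma isSquare_mul_pow_iff {a x : F} (ha : a ≠ 0) (hx : x ≠ 0) (hxs : IsSquare x) (t : ℕ) :
    IsSquare (a * x ^ t) ↔ IsSquare a := by
  simp [isSquare_mul_iff_of_ne_zero ha (pow_ne_zero t hx), hxs.pow t]

lemma isSquare_mul_mul_sub_sq_iff {a θ x : F} (ha : a ≠ 0) (hθ : IsSquare θ) (hxs : ¬IsSquare x) :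
    IsSquare (a * (x * (x - θ) ^ 2)) ↔ ¬IsSquare a := by
  have hx : x ≠ 0 := fun h => hxs (h ▸ IsSquare.zero)
  have hxθ : (x - θ) ^ 2 ≠ 0 := pow_ne_zero 2 (sub_ne_zero.mpr fun h => hxs (h ▸ hθ))
  rw [← mul_assoc, isSquare_mul_iff_of_ne_zero (mul_ne_zero ha hx) hxθ,
    isSquare_mul_iff_of_ne_zero ha hx]
  simp [hxs, IsSquare.sq]

theorem injOn_pow_nonzero_squares_iff (hF : ringChar F ≠ 2) (t : ℕ) :
    {x : F | x ≠ 0 ∧ IsSquare x}.InjOn (· ^ t) ↔ t.Coprime (Fintype.card F / 2) := by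
  classical
  set m := Fintype.card F / 2
  constructor
  · intro hinj
    by_contra hcop
    obtain ⟨p, hp, hpd⟩ := Nat.exists_prime_and_dvd hcop
    have := Fact.mk hp
    have hpm : p ∣ m := hpd.trans (Nat.gcd_dvd_right _ _)
    have hpunits : p ∣ Fintype.card Fˣ := by
      rw [Fintype.card_units, ← Nat.two_mul_odd_div_two (odd_card_of_char_ne_two hF)]
      exact hpm.mul_left 2
    obtain ⟨z, hz⟩ := exists_prime_orderOf_dvd_card p hpunits
    have hzm : (z : F) ^ m = 1 := by
      rw [← Units.val_pow_eq_pow_val, orderOf_dvd_iff_pow_eq_one.mp (hz ▸ hpm), Units.val_one]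
    have hzt : (z : F) ^ t = 1 := by
      rw [← Units.val_pow_eq_pow_val, Units.val_eq_one, ← orderOf_dvd_iff_pow_eq_one, hz]
      exact hpd.trans (Nat.gcd_dvd_left _ _)
    have hz1 : (z : F) = 1 :=
      hinj ⟨z.ne_zero, (isSquare_iff hF z.ne_zero).mpr hzm⟩ ⟨one_ne_zero, IsSquare.one⟩
        (by simp [hzt])
    exact hp.one_lt.ne' (hz ▸ orderOf_eq_one_iff.mpr (Units.ext hz1))
  · rintro hcop x ⟨hx0, hx⟩ y ⟨hy0, hy⟩ (hxy : x ^ t = y ^ t)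
    have hzt : (x / y) ^ t = 1 := by rw [div_pow, hxy, div_self (pow_ne_zero _ hy0)]
    have hzm : (x / y) ^ m = 1 := by
      rw [div_pow, (isSquare_iff hF hx0).mp hx, (isSquare_iff hF hy0).mp hy, div_one]
    have hz : (x / y) ^ t.gcd m = 1 := pow_gcd_eq_one.mpr ⟨hzt, hzm⟩
    rwa [hcop, pow_one, div_eq_one_iff_eq hy0] at hz

theorem injective_iff_of_isSquare_classes (hF : ringChar F ≠ 2) {f : F → F} (hf0 : f 0 = 0)
    {a b : Prop} (hsq : ∀ x, x ≠ 0 → IsSquare x → f x ≠ 0 ∧ (IsSquare (f x) ↔ a))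
    (hnsq : ∀ x, x ≠ 0 → ¬IsSquare x → f x ≠ 0 ∧ (IsSquare (f x) ↔ b)) :
    f.Injective ↔
      {x : F | x ≠ 0 ∧ IsSquare x}.InjOn f ∧ {x : F | ¬IsSquare x}.InjOn f ∧ (a ↔ ¬b) := by
  have hclass : ∀ x, x ≠ 0 → f x ≠ 0 ∧ (IsSquare x ∧ (IsSquare (f x) ↔ a) ∨
      ¬IsSquare x ∧ (IsSquare (f x) ↔ b)) := fun x hx => by
    by_cases h : IsSquare x
    · exact ⟨(hsq x hx h).1, .inl ⟨h, (hsq x hx h).2⟩⟩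
    · exact ⟨(hnsq x hx h).1, .inr ⟨h, (hnsq x hx h).2⟩⟩
  have hpre : ∀ {x}, f x ≠ 0 → x ≠ 0 := fun hfx hx => hfx (hx ▸ hf0)
  constructor
  · intro hinj
    have hsurj := Finite.injective_iff_surjective.mp hinj
    obtain ⟨u, hu⟩ := hsurj 1
    obtain ⟨c, hc⟩ := exists_nonsquare hF
    obtain ⟨v, hv⟩ := hsurj c
    have hu1 := (hclass u (hpre (hu ▸ one_ne_zero))).2
    have hvc := (hclass v (hpre (hv ▸ fun h => hc (h ▸ IsSquare.zero)))).2
    rw [hu] at hu1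
    rw [hv] at hvc
    refine ⟨hinj.injOn, hinj.injOn, ?_⟩
    have := IsSquare.one (α := F)
    tauto
  · rintro ⟨hS, hN, hab⟩ x y hxy
    rcases eq_or_ne x 0 with rfl | hx
    · by_contra hy
      exact (hclass y (Ne.symm hy)).1 (hxy ▸ hf0)
    rcases eq_or_ne y 0 with rfl | hy
    · exact absurd (hxy.trans hf0) (hclass x hx).1
    have hcx := (hclass x hx).2
    have hcy := (hclass y hy).2
    rw [hxy] at hcx
    by_cases hxs : IsSquare x <;> by_cases hys : IsSquare y
    · exact hS ⟨hx, hxs⟩ ⟨hy, hys⟩ hxy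
    · tauto
    · tauto
    · exact hN hxs hys hxy

end Field

theorem stmt_17_general {F : Type*} [Field F] [Fintype F] (n : ℕ)
    (hcard : Fintype.card F = 3 ^ n)
    (t : ℕ)
    (α β θ : F) (hα : α ≠ 0) (hβ : β ≠ 0)
    (f : F → F)
    (hf0 : f 0 = 0)
    (hfs : ∀ x : F, x ≠ 0 → IsSquare x → f x = α * x ^ t)
    (hfn : ∀ x : F, x ≠ 0 → ¬ IsSquare x → f x = β * (x ^ 3 + θ * x ^ 2 + θ ^ 2 * x)) :
    Function.Bijective f ↔
      (Nat.gcd t ((3 ^ n - 1) / 2) = 1 ∧ IsSquare θ ∧ (IsSquare α ↔ IsSquare β)) := by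
  have hchar : ringChar F = 3 := ringChar_eq_of_card_eq_prime_pow Nat.prime_three hcard
  have : CharP F 3 := ringChar.of_eq hchar
  have hF : ringChar F ≠ 2 := by rw [hchar]; norm_num
  simp_rw [cube_add_eq_mul_sub_sq] at hfn
  have hm : (3 ^ n - 1) / 2 = Fintype.card F / 2 := by
    have := Nat.odd_iff.mp (Odd.pow (by decide : Odd 3) (n := n))
    omega
  rw [Fintype.bijective_iff_injective_and_card, and_iff_left rfl, hm]
  by_cases hθ : IsSquare θ
  · have hsq x (hx : x ≠ 0) (hxs : IsSquare x) : f x ≠ 0 ∧ (IsSquare (f x) ↔ IsSquare α) := by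
      rw [hfs x hx hxs]
      exact ⟨mul_ne_zero hα (pow_ne_zero t hx), isSquare_mul_pow_iff hα hx hxs t⟩
    have hnsq x (hx : x ≠ 0) (hxs : ¬IsSquare x) :
        f x ≠ 0 ∧ (IsSquare (f x) ↔ ¬IsSquare β) := by
      rw [hfn x hx hxs]
      have hxθ : x - θ ≠ 0 := sub_ne_zero.mpr fun h => hxs (h ▸ hθ)
      exact ⟨by positivity, isSquare_mul_mul_sub_sq_iff hβ hθ hxs⟩
    have hSeq : EqOn f (fun x => α * x ^ t) {x | x ≠ 0 ∧ IsSquare x} :=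
      fun x hx => hfs x hx.1 hx.2
    have hNeq : EqOn f (fun x => β * (x * (x - θ) ^ 2)) {x | ¬IsSquare x} :=
      fun x hx => hfn x (fun h => hx (h ▸ IsSquare.zero)) hx
    rw [injective_iff_of_isSquare_classes hF hf0 hsq hnsq, hSeq.injOn_iff,
      injOn_const_mul_iff hα, injOn_pow_nonzero_squares_iff hF, hNeq.injOn_iff,
      injOn_const_mul_iff hβ]
    simp [injOn_mul_sub_sq_of_isSquare hθ, hθ, Nat.Coprime]
  · have hθ0 : θ ≠ 0 := fun h => hθ (h ▸ IsSquare.zero)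
    refine iff_of_false (fun hinj => hθ0 (hinj ?_)) (fun h => hθ h.2.1)
    rw [hf0, hfn θ hθ0 hθ]
    simp

theorem stmt_17 {F : Type*} [Field F] [Fintype F] (n : ℕ) (hn : 1 ≤ n)
    (hcard : Fintype.card F = 3 ^ n)
    (t : ℕ) (ht : 0 < t)
    (α β θ : F) (hα : α ≠ 0) (hβ : β ≠ 0) (hθ : θ ≠ 0)
    (f : F → F)
    (hf0 : f 0 = 0)
    (hfs : ∀ x : F, x ≠ 0 → IsSquare x → f x = α * x ^ t)
    (hfn : ∀ x : F, x ≠ 0 → ¬ IsSquare x → f x = β * (x ^ 3 + θ * x ^ 2 + θ ^ 2 * x)) :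
    Function.Bijective f ↔
      (Nat.gcd t ((3 ^ n - 1) / 2) = 1 ∧ IsSquare θ ∧ (IsSquare α ↔ IsSquare β)) :=
  stmt_17_general n hcard t α β θ hα hβ f hf0 hfs hfn
end
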